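/- Let A be a unital *-subalgebra of L(H) with maximal projector family {P_1,...,P_p} summing to 1 and such that P_i A P_j ≠ 0 for all i,j. Then dim_ℂ A = p², and a basis is given by elements E_{ij} ∈ P_i A P_j satisfying E_{ij} E_{kl} = δ_{jk} E_{il} and E_{ij}† = E_{ji} (a system of matrix units). -/

import Mathlib

open scoped BigOperators

/-- A family of nonzero, self-adjoint, pairwise orthogonal projectors in `A`. -/
def IsOrthProjFamily {E : Type*} [NormedAddCommGroup E] [InnerProductSpace ℂ E]
    [FiniteDimensional ℂ E] (A : StarSubalgebra ℂ (E →ₗ[ℂ] E))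
    {p : ℕ} (P : Fin p → (E →ₗ[ℂ] E)) : Prop :=
  (∀ i, P i ∈ A) ∧ (∀ i, P i ≠ 0) ∧ (∀ i, star (P i) = P i) ∧
    (∀ i j, P i * P j = if i = j then P i else 0)

/-- Maximality: no such family spans a strictly larger subalgebra. -/
def IsMaximalOrthProjFamily {E : Type*} [NormedAddCommGroup E] [InnerProductSpace ℂ E]
    [FiniteDimensional ℂ E] (A : StarSubalgebra ℂ (E →ₗ[ℂ] E))
    {p : ℕ} (P : Fin p → (E →ₗ[ℂ] E)) : Prop :=
  IsOrthProjFamily A P ∧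
    ∀ (m : ℕ) (Q : Fin m → (E →ₗ[ℂ] E)), IsOrthProjFamily A Q →
      ¬ Algebra.adjoin ℂ (Set.range P) < Algebra.adjoin ℂ (Set.range Q)

/-!
Maximality of the family forces every corner `P i A P i` to be `ℂ P i`. Otherwise the corner
contains a non-scalar self-adjoint `T`. The spectral projection `R` of `T` for a nonzero
eigenvalue is a polynomial in `T`, so it lies in `A`, and `R ≠ 0`, `R ≠ P i`, `P i R = R`.
Splitting `P i` into `R` and `P i - R` gives an orthogonal family whose algebra contains `R`,
whereas every element of the algebra generated by `P` acts on the range of `P i` as a scalar.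

Fix `i₀`. For each `j` pick a nonzero `N ∈ P i₀ A P j`. Then `N⋆ N` is a positive multiple of
`P j`, so a rescaling `G j` of `N` has `G j⋆ G j = P j`, and `G j G j⋆ = P i₀` because it is a
nonzero projection in the corner of `P i₀`. The `F i j = G i⋆ G j` are matrix units with
`F i i = P i`; each `P i Y P j = F i j (F j i Y P j)` is a multiple of `F i j`, so they span `A`.
-/

open Polynomial

section Algebra

variable {K R : Type*} [Field K] [Ring R] [Algebra K R]

theorem eq_zero_or_eq_one_of_isIdempotentElem_smul {e : R}
    (he : IsIdempotentElem e) (he0 : e ≠ 0) {c : K} (h : IsIdempotentElem (c • e)) :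
    c = 0 ∨ c = 1 := by
  rw [← IsIdempotentElem.iff_eq_zero_or_one]
  refine smul_left_injective K he0 ?_
  simpa only [smul_mul_smul_comm, he.eq] using h.eq

variable {ι : Type*} [DecidableEq ι]

theorem exists_smul_of_mem_adjoin_range {P : ι → R}
    (hP : ∀ i j, P i * P j = if i = j then P i else 0) (i : ι) {X : R}
    (hX : X ∈ Algebra.adjoin K (Set.range P)) :
    ∃ c : K, P i * X = c • P i ∧ X * P i = c • P i := by
  induction hX using Algebra.adjoin_induction with
  | mem x hx =>
    obtain ⟨j, rfl⟩ := hx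
    refine ⟨if i = j then 1 else 0, ?_, ?_⟩ <;> by_cases hij : i = j <;> simp [hP, hij, eq_comm]
  | algebraMap r => exact ⟨r, by simp [Algebra.algebraMap_eq_smul_one]⟩
  | add x y _ _ hx hy =>
    obtain ⟨c, hxl, hxr⟩ := hx
    obtain ⟨d, hyl, hyr⟩ := hy
    exact ⟨c + d, by rw [mul_add, hxl, hyl, add_smul], by rw [add_mul, hxr, hyr, add_smul]⟩
  | mul x y _ _ hx hy =>
    obtain ⟨c, hxl, hxr⟩ := hx
    obtain ⟨d, hyl, hyr⟩ := hy
    refine ⟨c * d, ?_, ?_⟩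
    · rw [← mul_assoc, hxl, smul_mul_assoc, hyl, smul_smul]
    · rw [mul_assoc, hyr, mul_smul_comm, hxr, smul_smul, mul_comm]

theorem linearIndependent_of_mul_eq_ite {F : ι → ι → R}
    (hF : ∀ i j k l, F i j * F k l = if j = k then F i l else 0) (hF0 : ∀ i, F i i ≠ 0) :
    LinearIndependent K (fun ij : ι × ι => F ij.1 ij.2) := by
  have hsandwich : ∀ i j k l, F k k * F i j * F l l = if k = i ∧ j = l then F k l else 0 := by
    intro i j k l
    by_cases hki : k = i <;> by_cases hjl : j = l <;> simp [hF, hki, hjl]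
  have hne : ∀ k l, F k l ≠ 0 := fun k l h => hF0 k (by simpa [h] using (hF k l l k).symm)
  rw [linearIndependent_iff']
  intro s g hg ⟨k, l⟩ hkl
  have h := congrArg (fun X => F k k * X * F l l) hg
  simp only [Finset.mul_sum, Finset.sum_mul, mul_smul_comm, smul_mul_assoc, hsandwich,
    mul_zero, zero_mul] at h
  rw [Finset.sum_eq_single (k, l)
    (fun ij _ hij => by rw [if_neg fun h => hij (Prod.ext h.1.symm h.2), smul_zero])
    (fun h' => absurd hkl h')] at h
  simpa [hne] using h

theorem span_eq_of_mul_eq_ite [Fintype ι] {S : Subalgebra K R} {F : ι → ι → R}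
    (hFS : ∀ i j, F i j ∈ S) (hF : ∀ i j k l, F i j * F k l = if j = k then F i l else 0)
    (hsum : ∑ i, F i i = 1) (hcorner : ∀ i, ∀ Y ∈ S, F i i * Y * F i i ∈ K ∙ F i i) :
    Submodule.span K (Set.range fun ij : ι × ι => F ij.1 ij.2) = Subalgebra.toSubmodule S := by
  refine le_antisymm (Submodule.span_le.2 ?_) fun Y hY => ?_
  · rintro _ ⟨ij, rfl⟩
    exact hFS ij.1 ij.2
  have hblock : ∀ i j,
      F i i * Y * F j j ∈ Submodule.span K (Set.range fun ij : ι × ι => F ij.1 ij.2) := by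
    intro i j
    obtain ⟨c, hc⟩ :=
      Submodule.mem_span_singleton.1 (hcorner j (F j i * Y) (S.mul_mem (hFS j i) hY))
    have : F i i * Y * F j j = c • F i j := by
      calc F i i * Y * F j j = F i j * (F j j * (F j i * Y) * F j j) := by
            simp only [← mul_assoc, hF, if_true]
        _ = c • F i j := by rw [← hc, mul_smul_comm, hF, if_pos rfl]
    rw [this]
    exact Submodule.smul_mem _ c (Submodule.subset_span ⟨(i, j), rfl⟩)
  have hY : Y = ∑ i, ∑ j, F i i * Y * F j j := by
    simp only [← Finset.sum_mul, ← Finset.mul_sum, hsum, one_mul, mul_one]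
  rw [hY]
  exact Submodule.sum_mem _ fun i _ => Submodule.sum_mem _ fun j _ => hblock i j

theorem mul_eq_ite_of_mul_star_eq_ite [StarRing R] {G : ι → R} {e : R}
    (hG : ∀ j k, G j * star (G k) = if j = k then e else 0)
    (he : ∀ i, star (G i) * e = star (G i)) (i j k l : ι) :
    star (G i) * G j * (star (G k) * G l) = if j = k then star (G i) * G l else 0 := by
  rw [mul_assoc, ← mul_assoc (G j), hG]
  split_ifs <;> simp [← mul_assoc, he]

end Algebra

section StarModule

open Complex

variable {R : Type*} [AddCommGroup R] [Module ℂ R]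

theorem isSelfAdjoint_I_smul_sub_star [StarAddMonoid R] [StarModule ℂ R] (x : R) :
    IsSelfAdjoint (I • (x - star x)) := by
  rw [IsSelfAdjoint, star_smul, star_sub, star_star, Complex.star_def, Complex.conj_I, neg_smul,
    ← smul_neg, neg_sub]

theorem mem_of_add_star_mem_of_I_smul_sub_star_mem [Star R] {V : Submodule ℂ R} {x : R}
    (h₁ : x + star x ∈ V) (h₂ : I • (x - star x) ∈ V) : x ∈ V := by
  have hx : x = (2⁻¹ : ℂ) • (x + star x) + (-(2⁻¹ * I)) • (I • (x - star x)) := by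
    rw [smul_smul, show -(2⁻¹ * I) * I = (2⁻¹ : ℂ) by ring_nf; rw [I_sq]; ring]
    module
  rw [hx]
  exact V.add_mem (V.smul_mem _ h₁) (V.smul_mem _ h₂)

end StarModule

theorem star_aeval {K R : Type*} [CommSemiring K] [StarRing K] [Semiring R] [StarRing R]
    [Algebra K R] [StarModule K R] (a : R) (q : K[X]) :
    star (aeval a q) = aeval (star a) (q.map (starRingEnd K)) := by
  induction q using Polynomial.induction_on' with
  | add q r hq hr => simp [hq, hr]
  | monomial n c =>
    rw [map_monomial, aeval_monomial, aeval_monomial, star_mul, star_pow, ← algebraMap_star_comm,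
      ← Algebra.commutes, starRingEnd_apply]

section InnerProductSpace

variable {E : Type*} [NormedAddCommGroup E] [InnerProductSpace ℂ E] [FiniteDimensional ℂ E]

-- `R` is the Lagrange basis polynomial of `μ` on the spectrum of `T`, evaluated at `T`.
theorem exists_isStarProjection_mul_eq_smul {T : E →ₗ[ℂ] E} (hT : IsSelfAdjoint T)
    (hT0 : T ≠ 0) :
    ∃ μ : ℂ, μ ≠ 0 ∧ ∃ R ∈ Algebra.adjoin ℂ {T}, IsStarProjection R ∧ R ≠ 0 ∧ T * R = μ • R := by
  have hsymm : T.IsSymmetric := (LinearMap.isSymmetric_iff_isSelfAdjoint T).2 hT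
  set b := hsymm.eigenvectorBasis rfl
  set μ : Fin (Module.finrank ℂ E) → ℂ := fun k => (hsymm.eigenvalues rfl k : ℂ)
  have hb : ∀ k, Module.End.HasEigenvector T (μ k) (b k) :=
    hsymm.hasEigenvector_eigenvectorBasis rfl
  obtain ⟨k₀, hk₀⟩ : ∃ k, μ k ≠ 0 := by
    by_contra! h
    exact hT0 (b.toBasis.ext fun k => by simp [(hb k).apply_eq_smul, h])
  set q := Lagrange.basis (Finset.univ.image μ) id (μ k₀)
  have hmem : ∀ k, μ k ∈ Finset.univ.image μ := fun k =>
    Finset.mem_image_of_mem _ (Finset.mem_univ k)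
  have hq : ∀ k, q.eval (μ k) = if μ k = μ k₀ then 1 else 0 := by
    intro k
    split_ifs with h
    · rw [h]
      exact Lagrange.eval_basis_self (v := id) (Set.injOn_id _) (hmem k₀)
    · exact Lagrange.eval_basis_of_ne (v := id) (Ne.symm h) (hmem k)
  have hR : ∀ k, aeval T q (b k) = (if μ k = μ k₀ then 1 else 0 : ℂ) • b k := by
    intro k
    rw [Module.End.aeval_apply_of_hasEigenvector (hb k), hq]
  refine ⟨μ k₀, hk₀, aeval T q, ?_, ⟨?_, ?_⟩, ?_, ?_⟩
  · rw [Algebra.adjoin_singleton_eq_range_aeval]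
    exact ⟨q, rfl⟩
  · refine b.toBasis.ext fun k => ?_
    simp only [OrthonormalBasis.coe_toBasis, Module.End.mul_apply, hR, map_smul]
    split_ifs <;> simp
  · refine b.toBasis.ext fun k => ?_
    have hreal : starRingEnd ℂ (μ k) = μ k := Complex.conj_ofReal _
    rw [OrthonormalBasis.coe_toBasis, star_aeval, hT.star_eq,
      Module.End.aeval_apply_of_hasEigenvector (hb k), eval_map]
    nth_rw 1 [← hreal]
    rw [eval₂_at_apply, hq, hR]
    split_ifs <;> simp
  · intro h
    have := hR k₀
    rw [h, if_pos rfl, one_smul] at this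
    exact b.toBasis.ne_zero k₀ (by simpa using this.symm)
  · refine b.toBasis.ext fun k => ?_
    simp only [OrthonormalBasis.coe_toBasis, Module.End.mul_apply, hR, map_smul,
      LinearMap.smul_apply, (hb k).apply_eq_smul]
    split_ifs with h <;> simp [h]

theorem exists_star_smul_mul_smul_eq {N e : E →ₗ[ℂ] E} (he : IsIdempotentElem e)
    (hNe : N * e = N) (hN : N ≠ 0) {c : ℂ} (hc : star N * N = c • e) :
    ∃ s : ℂ, star (s • N) * (s • N) = e := by
  obtain ⟨x, hx⟩ : ∃ x, N x ≠ 0 := by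
    by_contra! h
    exact hN (LinearMap.ext h)
  set y := e x
  have hNy : N y = N x := by rw [← Module.End.mul_apply, hNe]
  have hy : y ≠ 0 := fun h => hx (by rw [← hNy, h, map_zero])
  -- `⟪N y, N y⟫ = c ⟪y, y⟫` exhibits `c` as the positive square `(‖N y‖ / ‖y‖) ^ 2`.
  set r : ℝ := ‖N y‖ / ‖y‖
  have hr : r ≠ 0 := div_ne_zero (norm_ne_zero_iff.2 (hNy ▸ hx)) (norm_ne_zero_iff.2 hy)
  have hcr : c = (r : ℂ) ^ 2 := by
    have h : inner ℂ (N y) (N y) = c * inner ℂ y y := by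
      rw [← LinearMap.adjoint_inner_right, ← LinearMap.star_eq_adjoint, ← Module.End.mul_apply,
        hc, LinearMap.smul_apply, inner_smul_right, ← Module.End.mul_apply e, he.eq]
    rw [inner_self_eq_norm_sq_to_K, inner_self_eq_norm_sq_to_K] at h
    have hy' : (‖y‖ : ℂ) ≠ 0 := by exact_mod_cast norm_ne_zero_iff.2 hy
    rw [(eq_div_iff (pow_ne_zero 2 hy')).2 h.symm]
    simp [r, div_eq_mul_inv, mul_pow, inv_pow]
  refine ⟨((r⁻¹ : ℝ) : ℂ), ?_⟩
  rw [star_smul, Complex.star_def, Complex.conj_ofReal, smul_mul_smul_comm, hc, smul_smul, hcr]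
  rw [← Complex.ofReal_pow, ← Complex.ofReal_mul, ← Complex.ofReal_mul]
  field_simp
  simp

end InnerProductSpace

namespace IsOrthProjFamily

variable {E : Type*} [NormedAddCommGroup E] [InnerProductSpace ℂ E] [FiniteDimensional ℂ E]
  {A : StarSubalgebra ℂ (E →ₗ[ℂ] E)} {p : ℕ} {P : Fin p → (E →ₗ[ℂ] E)}

theorem mem (hP : IsOrthProjFamily A P) (i : Fin p) : P i ∈ A := hP.1 i

theorem ne_zero (hP : IsOrthProjFamily A P) (i : Fin p) : P i ≠ 0 := hP.2.1 i

theorem mul_eq_ite (hP : IsOrthProjFamily A P) (i j : Fin p) :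
    P i * P j = if i = j then P i else 0 :=
  hP.2.2.2 i j

theorem isStarProjection (hP : IsOrthProjFamily A P) (i : Fin p) : IsStarProjection (P i) :=
  ⟨(by simpa using hP.mul_eq_ite i i : P i * P i = P i), hP.2.2.1 i⟩

theorem cons_sub_single (hP : IsOrthProjFamily A P) {i : Fin p} {R : E →ₗ[ℂ] E} (hRA : R ∈ A)
    (hR : IsStarProjection R) (hPR : P i * R = R) (hR0 : R ≠ 0) (hRP : R ≠ P i) :
    IsOrthProjFamily A (Fin.cons R (P - Pi.single i R) : Fin (p + 1) → E →ₗ[ℂ] E) := by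
  obtain ⟨hmem, hne, hstar, hmul⟩ := hP
  have hRPi : R * P i = R := by
    simpa [hR.isSelfAdjoint.star_eq, hstar i] using congrArg star hPR
  have hRPj : ∀ j, R * P j = if j = i then R else 0 := by
    intro j
    by_cases hj : j = i
    · rw [hj, hRPi, if_pos rfl]
    · rw [← hRPi, mul_assoc, hmul, if_neg (Ne.symm hj), if_neg hj, mul_zero]
  have hPjR : ∀ j, P j * R = if j = i then R else 0 := by
    intro j
    simpa [hR.isSelfAdjoint.star_eq, hstar j, apply_ite star] using congrArg star (hRPj j)
  refine ⟨Fin.cases hRA fun j => ?_, Fin.cases hR0 fun j => ?_,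
    Fin.cases hR.isSelfAdjoint fun j => ?_,
    Fin.cases (Fin.cases ?_ fun l => ?_) fun k => Fin.cases ?_ fun l => ?_⟩
  · by_cases hj : j = i <;> simp [hj, hmem, sub_mem, hRA]
  · by_cases hj : j = i <;> simp [hj, hne, sub_eq_zero, Ne.symm hRP]
  · by_cases hj : j = i <;> simp [hj, hstar, hR.isSelfAdjoint.star_eq]
  · simpa using hR.isIdempotentElem.eq
  · rcases eq_or_ne l i with rfl | hl
    · simp [hRPj, mul_sub, hR.isIdempotentElem.eq, (Fin.succ_ne_zero l).symm]
    · simp [hl, hRPj, (Fin.succ_ne_zero l).symm]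
  · by_cases hk : k = i <;> simp [hk, hPjR, sub_mul, hR.isIdempotentElem.eq]
  · have hRR := hR.isIdempotentElem.eq
    by_cases hk : k = i <;> by_cases hl : l = i
    · subst hk hl
      simp [hmul, hRPj, hPjR, hRR, sub_mul, mul_sub]
    · subst hk
      simp [hl, Ne.symm hl, hmul, hRPj, sub_mul]
    · subst hl
      simp [hk, hmul, hPjR, mul_sub]
    · simp [hk, hl, hmul]

end IsOrthProjFamily

namespace IsMaximalOrthProjFamily

variable {E : Type*} [NormedAddCommGroup E] [InnerProductSpace ℂ E] [FiniteDimensional ℂ E]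
  {A : StarSubalgebra ℂ (E →ₗ[ℂ] E)} {p : ℕ} {P : Fin p → (E →ₗ[ℂ] E)}

theorem eq_zero_or_eq (hP : IsMaximalOrthProjFamily A P) (i : Fin p) {R : E →ₗ[ℂ] E}
    (hRA : R ∈ A) (hR : IsStarProjection R) (hPR : P i * R = R) : R = 0 ∨ R = P i := by
  by_contra! hR0
  obtain ⟨hfam, hmax⟩ := hP
  set Q : Fin (p + 1) → E →ₗ[ℂ] E := Fin.cons R (P - Pi.single i R)
  have hRQ : R ∈ Algebra.adjoin ℂ (Set.range Q) := Algebra.subset_adjoin ⟨0, rfl⟩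
  have hPQ : Algebra.adjoin ℂ (Set.range P) ≤ Algebra.adjoin ℂ (Set.range Q) := by
    refine Algebra.adjoin_le fun _ ⟨j, hj⟩ => hj ▸ ?_
    have hPj : P j = Q j.succ + Pi.single (M := fun _ => E →ₗ[ℂ] E) i R j := by simp [Q]
    rw [hPj]
    refine add_mem (Algebra.subset_adjoin ⟨_, rfl⟩) ?_
    by_cases hj : j = i
    · simpa [hj] using hRQ
    · simp [hj]
  refine hmax (p + 1) Q (hfam.cons_sub_single hRA hR hPR hR0.1 hR0.2)
    (lt_of_le_of_ne hPQ fun h => ?_)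
  obtain ⟨c, hc, -⟩ := exists_smul_of_mem_adjoin_range hfam.mul_eq_ite i (h ▸ hRQ)
  rw [hPR] at hc
  subst hc
  obtain rfl | rfl := eq_zero_or_eq_one_of_isIdempotentElem_smul (hfam.isStarProjection i).1
    (hfam.ne_zero i) hR.1
  · exact hR0.1 (zero_smul _ _)
  · exact hR0.2 (one_smul _ _)

theorem mem_span_singleton_of_isSelfAdjoint (hP : IsMaximalOrthProjFamily A P) (i : Fin p)
    {T : E →ₗ[ℂ] E} (hTA : T ∈ A) (hT : IsSelfAdjoint T) (hPT : P i * T = T) :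
    T ∈ ℂ ∙ P i := by
  rcases eq_or_ne T 0 with rfl | hT0
  · exact zero_mem _
  obtain ⟨μ, hμ, R, hRT, hR, hR0, hTR⟩ := exists_isStarProjection_mul_eq_smul hT hT0
  have hRA : R ∈ A := Algebra.adjoin_le (Set.singleton_subset_iff.2 hTA) hRT
  have hPR : P i * R = R :=
    smul_right_injective _ hμ (by simp only [← mul_smul_comm, ← hTR, ← mul_assoc, hPT])
  have hTP : T * P i = T := by
    simpa [hT.star_eq, (hP.1.isStarProjection i).2.star_eq] using congrArg star hPT
  obtain h | h := hP.eq_zero_or_eq i hRA hR hPR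
  · exact absurd h hR0
  · exact Submodule.mem_span_singleton.2 ⟨μ, by rw [← hTP, ← h, hTR]⟩

theorem mul_mul_mem_span_singleton (hP : IsMaximalOrthProjFamily A P) (i : Fin p)
    {M : E →ₗ[ℂ] E} (hM : M ∈ A) : P i * M * P i ∈ ℂ ∙ P i := by
  have hPi := hP.1.isStarProjection i
  set X := P i * M * P i
  have hXA : X ∈ A := mul_mem (mul_mem (hP.1.mem i) hM) (hP.1.mem i)
  have hPX : P i * X = X := by simp only [X, mul_assoc, hPi.1.mul_self_mul]
  have hPXs : P i * star X = star X := by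
    simp only [X, star_mul, hPi.2.star_eq, mul_assoc, hPi.1.mul_self_mul]
  refine mem_of_add_star_mem_of_I_smul_sub_star_mem
    (hP.mem_span_singleton_of_isSelfAdjoint i (add_mem hXA (star_mem hXA)) (.add_star_self X)
      (by rw [mul_add, hPX, hPXs]))
    (hP.mem_span_singleton_of_isSelfAdjoint i (A.smul_mem (sub_mem hXA (star_mem hXA)) _)
      (isSelfAdjoint_I_smul_sub_star X) (by rw [mul_smul_comm, mul_sub, hPX, hPXs]))

theorem exists_partialIsometry (hP : IsMaximalOrthProjFamily A P)
    (hclass : ∀ i j, ∃ M ∈ A, P i * M * P j ≠ 0) (i j : Fin p) :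
    ∃ G ∈ A, P i * G = G ∧ G * P j = G ∧ star G * G = P j ∧ G * star G = P i := by
  have hPi := hP.1.isStarProjection i
  have hPj := hP.1.isStarProjection j
  obtain ⟨M, hMA, hN⟩ := hclass i j
  set N := P i * M * P j
  have hNP : N * P j = N := by simp only [N, mul_assoc, hPj.1.eq]
  obtain ⟨c, hc⟩ := Submodule.mem_span_singleton.1
    (hP.mul_mul_mem_span_singleton j (mul_mem (mul_mem (star_mem hMA) (hP.1.mem i)) hMA))
  have hNN : star N * N = c • P j := by
    rw [hc]
    simp only [N, star_mul, hPi.2.star_eq, hPj.2.star_eq, mul_assoc, hPi.1.mul_self_mul]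
  obtain ⟨s, hs⟩ := exists_star_smul_mul_smul_eq hPj.1 hNP hN hNN
  set G := s • N
  have hGA : G ∈ A := A.smul_mem (mul_mem (mul_mem (hP.1.mem i) hMA) (hP.1.mem j)) s
  have hPG : P i * G = G := by simp only [G, N, mul_smul_comm, mul_assoc, hPi.1.mul_self_mul]
  have hGP : G * P j = G := by rw [smul_mul_assoc, hNP]
  have hGsP : star G * P i = star G := by
    rw [← hPi.2.star_eq, ← star_mul, hPG]
  refine ⟨G, hGA, hPG, hGP, hs, ?_⟩
  obtain ⟨d, hd⟩ := Submodule.mem_span_singleton.1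
    (hP.mul_mul_mem_span_singleton i (mul_mem hGA (star_mem hGA)))
  rw [← mul_assoc, hPG, mul_assoc, hGsP] at hd
  have hidem : IsIdempotentElem (d • P i) := by
    rw [IsIdempotentElem, hd, mul_assoc, ← mul_assoc (star G), hs, ← mul_assoc, hGP]
  obtain rfl | rfl := eq_zero_or_eq_one_of_isIdempotentElem_smul hPi.1 (hP.1.ne_zero i) hidem
  · refine absurd ?_ (hP.1.ne_zero j)
    rw [← hPj.1.eq, ← hs, mul_assoc, ← mul_assoc G, ← hd, zero_smul, zero_mul, mul_zero]
  · rw [← hd, one_smul]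

theorem exists_matrixUnits (hP : IsMaximalOrthProjFamily A P)
    (hclass : ∀ i j, ∃ M ∈ A, P i * M * P j ≠ 0) :
    ∃ F : Fin p → Fin p → (E →ₗ[ℂ] E), (∀ i j, F i j ∈ A) ∧ (∀ i j, P i * F i j * P j = F i j) ∧
      (∀ i j k l, F i j * F k l = if j = k then F i l else 0) ∧
      (∀ i j, star (F i j) = F j i) ∧ ∀ i, F i i = P i := by
  rcases isEmpty_or_nonempty (Fin p) with hp | ⟨⟨i₀⟩⟩
  · exact ⟨fun i => isEmptyElim i, isEmptyElim, isEmptyElim, isEmptyElim, isEmptyElim,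
      isEmptyElim⟩
  choose G hGA hPG hGP hGG hGG' using hP.exists_partialIsometry hclass i₀
  have hPsG : ∀ j, P j * star (G j) = star (G j) := fun j => by
    rw [← (hP.1.isStarProjection j).2.star_eq, ← star_mul, hGP]
  have hGsG : ∀ j k, G j * star (G k) = if j = k then P i₀ else 0 := by
    intro j k
    split_ifs with h
    · rw [h, hGG']
    · rw [← hGP j, ← hPsG k, mul_assoc, ← mul_assoc (P j), hP.1.mul_eq_ite, if_neg h, zero_mul,
        mul_zero]
  have hsGP : ∀ i, star (G i) * P i₀ = star (G i) := fun i => by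
    rw [← (hP.1.isStarProjection i₀).2.star_eq, ← star_mul, hPG]
  refine ⟨fun i j => star (G i) * G j, fun i j => mul_mem (star_mem (hGA i)) (hGA j),
    fun i j => ?_, mul_eq_ite_of_mul_star_eq_ite hGsG hsGP, fun i j => by simp [star_mul], hGG⟩
  rw [← mul_assoc, hPsG, mul_assoc, hGP]

end IsMaximalOrthProjFamily

theorem dim_eq_p_squared_matrix_units
    {E : Type*} [NormedAddCommGroup E] [InnerProductSpace ℂ E] [FiniteDimensional ℂ E]
    (A : StarSubalgebra ℂ (E →ₗ[ℂ] E)) {p : ℕ} (P : Fin p → (E →ₗ[ℂ] E))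
    (hP : IsMaximalOrthProjFamily A P) (hsum : ∑ i, P i = 1)
    (hclass : ∀ i j, ∃ M ∈ A, P i * M * P j ≠ 0) :
    Module.finrank ℂ A = p ^ 2 ∧
      ∃ F : Fin p → Fin p → (E →ₗ[ℂ] E),
        (∀ i j, F i j ∈ A ∧ ∃ M ∈ A, F i j = P i * M * P j) ∧
        (∀ i j k l, F i j * F k l = if j = k then F i l else 0) ∧
        (∀ i j, star (F i j) = F j i) ∧
        LinearIndependent ℂ (fun ij : Fin p × Fin p => F ij.1 ij.2) ∧
        Submodule.span ℂ (Set.range (fun ij : Fin p × Fin p => F ij.1 ij.2))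
          = Subalgebra.toSubmodule A.toSubalgebra := by
  obtain ⟨F, hFA, hPFP, hFmul, hFstar, hFdiag⟩ := hP.exists_matrixUnits hclass
  have hlin : LinearIndependent ℂ (fun ij : Fin p × Fin p => F ij.1 ij.2) :=
    linearIndependent_of_mul_eq_ite hFmul fun i => hFdiag i ▸ hP.1.ne_zero i
  have hspan : Submodule.span ℂ (Set.range (fun ij : Fin p × Fin p => F ij.1 ij.2))
      = Subalgebra.toSubmodule A.toSubalgebra :=
    span_eq_of_mul_eq_ite hFA hFmul (by simpa only [hFdiag] using hsum)
      fun i Y hY => hFdiag i ▸ hP.mul_mul_mem_span_singleton i hY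
  refine ⟨?_, F, fun i j => ⟨hFA i j, F i j, hFA i j, (hPFP i j).symm⟩, hFmul, hFstar, hlin,
    hspan⟩
  have hcard := finrank_span_eq_card hlin
  rw [hspan] at hcard
  exact hcard.trans (by simp [sq])
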